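/- Let ℋ be countable with codelengths satisfying the Kraft inequality, fix 0 < β < 1, let h* := argmax_{h∈ℋ} Q_PR(h) subject to Q_RE(h) ≥ β, and let ĥ := argmax_{h∈ℋ} Q̂_PR(h) − φ_D(h, δ) subject to Q̂_RE(h) ≥ β − φ_FN(h, δ). Then for any δ > 0 and any n ≥ 1, with probability at least 1 − 2δ over the draw of the training data, both Q_PR(ĥ) ≥ Q_PR(h*) − 2 φ_D(h*, δ) and Q_RE(ĥ) ≥ β − 2 φ_FN(ĥ, δ). -/

import Mathlib

open MeasureTheory ENNReal

/-- The false discovery rate `R_D(h)`, equal to `∞` when `P(h(X) = 1) = 0`. -/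
noncomputable def RD {𝓧 : Type*} [MeasurableSpace 𝓧] (P : Measure (𝓧 × Bool))
    (h : 𝓧 → Bool) : ℝ≥0∞ :=
  if 0 < P {z : 𝓧 × Bool | h z.1 = true} then
    P {z : 𝓧 × Bool | z.2 = false ∧ h z.1 = true} / P {z : 𝓧 × Bool | h z.1 = true}
  else ⊤

/-- The false negative rate `R_FN(h) = P(h(X) = 0 | Y = 1)`. -/
noncomputable def RFN {𝓧 : Type*} [MeasurableSpace 𝓧] (P : Measure (𝓧 × Bool))
    (h : 𝓧 → Bool) : ℝ≥0∞ :=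
  P {z : 𝓧 × Bool | h z.1 = false ∧ z.2 = true} / P {z : 𝓧 × Bool | z.2 = true}

/-- The precision `Q_PR(h) = P(Y = 1 | h(X) = 1) = 1 - R_D(h)`. -/
noncomputable def QPR {𝓧 : Type*} [MeasurableSpace 𝓧] (P : Measure (𝓧 × Bool))
    (h : 𝓧 → Bool) : ℝ≥0∞ :=
  1 - RD P h

/-- The recall `Q_RE(h) = P(h(X) = 1 | Y = 1) = 1 - R_FN(h)`. -/
noncomputable def QRE {𝓧 : Type*} [MeasurableSpace 𝓧] (P : Measure (𝓧 × Bool))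
    (h : 𝓧 → Bool) : ℝ≥0∞ :=
  1 - RFN P h

/-- The empirical number of discoveries `n_D(h, Zⁿ)`. -/
def nD {𝓧 : Type*} {n : ℕ} (h : 𝓧 → Bool) (ω : Fin n → 𝓧 × Bool) : ℕ :=
  (Finset.univ.filter fun i => h (ω i).1 = true).card

/-- The number of positive training examples `n₁`. -/
def npos {𝓧 : Type*} {n : ℕ} (ω : Fin n → 𝓧 × Bool) : ℕ :=
  (Finset.univ.filter fun i => (ω i).2 = true).card

/-- The empirical false discovery rate `R̂_D(h)`, equal to `∞` when `n_D(h, Zⁿ) = 0`. -/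
noncomputable def RhatD {𝓧 : Type*} {n : ℕ} (h : 𝓧 → Bool) (ω : Fin n → 𝓧 × Bool) : ℝ≥0∞ :=
  if 0 < nD h ω then
    ((Finset.univ.filter fun i => (ω i).2 = false ∧ h (ω i).1 = true).card : ℝ≥0∞)
      / (nD h ω : ℝ≥0∞)
  else ⊤

/-- The empirical false negative rate, equal to `0` when `n₁ = 0`. -/
noncomputable def RhatFN {𝓧 : Type*} {n : ℕ} (h : 𝓧 → Bool) (ω : Fin n → 𝓧 × Bool) : ℝ≥0∞ :=
  if 0 < npos ω then
    ((Finset.univ.filter fun i => (ω i).2 = true ∧ h (ω i).1 = false).card : ℝ≥0∞)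
      / (npos ω : ℝ≥0∞)
  else 0

/-- The empirical precision `Q̂_PR(h) = 1 - R̂_D(h)`. -/
noncomputable def QhatPR {𝓧 : Type*} {n : ℕ} (h : 𝓧 → Bool) (ω : Fin n → 𝓧 × Bool) : ℝ≥0∞ :=
  1 - RhatD h ω

/-- The empirical recall `Q̂_RE(h) = 1 - R̂_FN(h)`. -/
noncomputable def QhatRE {𝓧 : Type*} {n : ℕ} (h : 𝓧 → Bool) (ω : Fin n → 𝓧 × Bool) : ℝ≥0∞ :=
  1 - RhatFN h ω

/-- The penalty `φ_D`: `√((⟦h⟧ log 2 + log(2/δ)) / (2 m))`, equal to `∞` when `m = 0`. -/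
noncomputable def pen (c δ : ℝ) (m : ℕ) : ℝ≥0∞ :=
  if 0 < m then ENNReal.ofReal (Real.sqrt ((c * Real.log 2 + Real.log (2 / δ)) / (2 * m)))
  else ⊤

/-- The penalty `φ_FN`: `√((⟦h⟧ log 2 + log(2/δ)) / (2 m))`, equal to `1` when `m = 0`. -/
noncomputable def penNP (c δ : ℝ) (m : ℕ) : ℝ≥0∞ :=
  if 0 < m then ENNReal.ofReal (Real.sqrt ((c * Real.log 2 + Real.log (2 / δ)) / (2 * m)))
  else 1

/-!
Given that `h` makes `m` discoveries (resp. that the sample has `m` positive examples), the number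
of false discoveries (resp. of missed positives) is binomial with the population rate as
parameter. Hoeffding's lemma and Chernoff's bound therefore make the empirical rate deviate from
the population rate by more than `√(L / (2m))` with probability at most `2 e^{-L}`, whatever `m`.
For `L = ⟦h⟧ log 2 + log (2 / δ)` this is `δ 2^{-⟦h⟧}`, so by Kraft's inequality all rates of all
classifiers in `ℋ` are simultaneously within their penalties of the empirical ones with
probability at least `1 - 2δ`. On that event `h*` satisfies the empirical recall constraint, and
chaining the deviation bounds for `h*` and `ĥ` with the empirical optimality of `ĥ` gives both
inequalities.
-/

lemma binomial_term_nonneg {q : ℝ} (hq0 : 0 ≤ q) (hq1 : q ≤ 1) (m k : ℕ) :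
    0 ≤ (m.choose k : ℝ) * q ^ k * (1 - q) ^ (m - k) := by
  have := sub_nonneg.2 hq1
  positivity

lemma one_sub_add_mul_exp_le {q : ℝ} (hq0 : 0 ≤ q) (hq1 : q ≤ 1) (s : ℝ) :
    1 - q + q * Real.exp s ≤ Real.exp (q * s + s ^ 2 / 8) := by
  have hoeffding := (ProbabilityTheory.hasSubgaussianMGF_of_mem_Icc (a := 0) (b := 1)
    (X := fun b : Bool => if b then (1 : ℝ) else 0)
    (μ := ProbabilityTheory.bernoulliMeasure true false ⟨q, hq0, hq1⟩)
    Measurable.of_discrete.aemeasurable (ae_of_all _ fun b => by cases b <;> simp)).mgf_le s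
  simp only [ProbabilityTheory.mgf, ProbabilityTheory.integral_bernoulliMeasure] at hoeffding
  norm_num at hoeffding
  calc 1 - q + q * Real.exp s
      = Real.exp (q * s) * (q * Real.exp (s * (1 - q)) + (1 - q) * Real.exp (-(s * q))) := by
        rw [mul_add, mul_left_comm, ← Real.exp_add, mul_left_comm, ← Real.exp_add]
        ring_nf
        rw [Real.exp_zero]
        ring
    _ ≤ Real.exp (q * s) * Real.exp (s ^ 2 / 8) := by
        gcongr
        exact hoeffding.trans_eq (by congr 1; ring)
    _ = Real.exp (q * s + s ^ 2 / 8) := (Real.exp_add _ _).symm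

lemma binomial_upper_tail_le {q t : ℝ} (hq0 : 0 ≤ q) (hq1 : q ≤ 1) (ht : 0 ≤ t) (m : ℕ) :
    ∑ k ∈ (Finset.range (m + 1)).filter (fun k : ℕ => m * (q + t) ≤ k),
      (m.choose k : ℝ) * q ^ k * (1 - q) ^ (m - k) ≤ Real.exp (-(2 * m * t ^ 2)) := by
  -- Chernoff's bound with exponent `4 t`, the minimiser of `-s t + s ^ 2 / 8`
  calc _ ≤ ∑ k ∈ Finset.range (m + 1),
        Real.exp (4 * t * (k - m * (q + t))) * ((m.choose k : ℝ) * q ^ k * (1 - q) ^ (m - k)) := by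
        refine (Finset.sum_le_sum fun k hk => ?_).trans <|
          Finset.sum_le_sum_of_subset_of_nonneg (Finset.filter_subset _ _) fun k _ _ =>
            mul_nonneg (Real.exp_pos _).le (binomial_term_nonneg hq0 hq1 m k)
        refine le_mul_of_one_le_left (binomial_term_nonneg hq0 hq1 m k) (Real.one_le_exp ?_)
        have := (Finset.mem_filter.1 hk).2
        nlinarith
    _ = Real.exp (-(4 * t * m * (q + t))) * (q * Real.exp (4 * t) + (1 - q)) ^ m := by
        rw [add_pow, Finset.mul_sum]
        refine Finset.sum_congr rfl fun k _ => ?_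
        rw [mul_pow, ← Real.exp_nat_mul,
          show 4 * t * (k - m * (q + t)) = -(4 * t * m * (q + t)) + k * (4 * t) by ring,
          Real.exp_add]
        ring
    _ ≤ Real.exp (-(4 * t * m * (q + t))) * Real.exp (q * (4 * t) + (4 * t) ^ 2 / 8) ^ m := by
        have := sub_nonneg.2 hq1
        gcongr
        exact (one_sub_add_mul_exp_le hq0 hq1 (4 * t)).trans_eq' (by ring)
    _ = Real.exp (-(2 * m * t ^ 2)) := by
        rw [← Real.exp_nat_mul, ← Real.exp_add]
        ring_nf

lemma binomial_lower_tail_le {q t : ℝ} (hq0 : 0 ≤ q) (hq1 : q ≤ 1) (ht : 0 ≤ t) (m : ℕ) :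
    ∑ k ∈ (Finset.range (m + 1)).filter (fun k : ℕ => k ≤ m * (q - t)),
      (m.choose k : ℝ) * q ^ k * (1 - q) ^ (m - k) ≤ Real.exp (-(2 * m * t ^ 2)) := by
  refine le_of_eq_of_le ?_ (binomial_upper_tail_le (sub_nonneg.2 hq1) (sub_le_self 1 hq0) ht m)
  rw [Finset.sum_filter, Finset.sum_filter, ← Finset.sum_range_reflect]
  refine Finset.sum_congr rfl fun k hk => ?_
  have hkm : k ≤ m := Nat.lt_succ_iff.1 (Finset.mem_range.1 hk)
  rw [Nat.add_sub_cancel, Nat.cast_sub hkm, Nat.choose_symm hkm, Nat.sub_sub_self hkm,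
    _root_.sub_sub_cancel]
  congr 1
  · exact propext (by constructor <;> intro h <;> linarith)
  · ring

lemma binomial_two_sided_tail_le {q t : ℝ} (hq0 : 0 ≤ q) (hq1 : q ≤ 1) (ht : 0 ≤ t) (m : ℕ) :
    ∑ k ∈ (Finset.range (m + 1)).filter (fun k : ℕ => m * t ≤ |k - m * q|),
      (m.choose k : ℝ) * q ^ k * (1 - q) ^ (m - k) ≤ 2 * Real.exp (-(2 * m * t ^ 2)) := by
  have hsplit : (Finset.range (m + 1)).filter (fun k : ℕ => m * t ≤ |k - m * q|) =
      (Finset.range (m + 1)).filter (fun k : ℕ => m * (q + t) ≤ k) ∪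
        (Finset.range (m + 1)).filter (fun k : ℕ => k ≤ m * (q - t)) := by
    rw [← Finset.filter_or]
    refine Finset.filter_congr fun k _ => ?_
    rw [le_abs']
    constructor <;> rintro (h | h) <;> [right; left; right; left] <;> linarith
  rw [hsplit, two_mul]
  refine le_of_add_le_of_nonneg_left ((Finset.sum_union_inter).trans_le ?_) ?_
  · exact add_le_add (binomial_upper_tail_le hq0 hq1 ht m) (binomial_lower_tail_le hq0 hq1 ht m)
  · exact Finset.sum_nonneg fun k _ => binomial_term_nonneg hq0 hq1 m k

lemma measure_eq_div_mul_of_subset {α : Type*} [MeasurableSpace α] {μ : Measure α}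
    [IsFiniteMeasure μ] {s t : Set α} (h : s ⊆ t) : μ s = μ s / μ t * μ t := by
  rcases eq_or_ne (μ t) 0 with ht | ht
  · rw [ht, mul_zero]; exact measure_mono_null h ht
  · exact (ENNReal.div_mul_cancel ht (measure_ne_top μ t)).symm

lemma measure_diff_eq_one_sub_div_mul {α : Type*} [MeasurableSpace α] {μ : Measure α}
    [IsFiniteMeasure μ] {s t : Set α} (hs : MeasurableSet s) (h : s ⊆ t) :
    μ (t \ s) = (1 - μ s / μ t) * μ t := by
  rw [ENNReal.sub_mul fun _ _ => measure_ne_top μ t, one_mul, ← measure_eq_div_mul_of_subset h,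
    measure_sdiff h hs.nullMeasurableSet (measure_ne_top μ s)]

def Near (a b ε : ℝ≥0∞) : Prop := a ≤ b + ε ∧ b ≤ a + ε

lemma near_ofReal_iff {x y t : ℝ} (hx : 0 ≤ x) (hy : 0 ≤ y) (ht : 0 ≤ t) :
    Near (ENNReal.ofReal x) (ENNReal.ofReal y) (ENNReal.ofReal t) ↔ |x - y| ≤ t := by
  rw [Near, ← ENNReal.ofReal_add hy ht, ← ENNReal.ofReal_add hx ht,
    ENNReal.ofReal_le_ofReal_iff (by positivity), ENNReal.ofReal_le_ofReal_iff (by positivity),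
    abs_sub_le_iff]
  constructor <;> rintro ⟨h₁, h₂⟩ <;> constructor <;> linarith

lemma ofReal_binomial_term {q : ℝ} (hq0 : 0 ≤ q) (hq1 : q ≤ 1) (m k : ℕ) :
    ENNReal.ofReal ((m.choose k : ℝ) * q ^ k * (1 - q) ^ (m - k)) =
      (m.choose k : ℝ≥0∞) * ENNReal.ofReal q ^ k * (1 - ENNReal.ofReal q) ^ (m - k) := by
  have := sub_nonneg.2 hq1
  rw [ENNReal.ofReal_mul (by positivity), ENNReal.ofReal_mul (by positivity),
    ENNReal.ofReal_natCast, ENNReal.ofReal_pow hq0, ENNReal.ofReal_pow this,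
    ENNReal.ofReal_sub _ hq0, ENNReal.ofReal_one]

section Hits

variable {Z : Type*} {n : ℕ}

def hits (s : Set Z) [DecidablePred (· ∈ s)] (ω : Fin n → Z) : Finset (Fin n) :=
  Finset.univ.filter fun i => ω i ∈ s

variable {A B : Set Z} [DecidablePred (· ∈ A)] [DecidablePred (· ∈ B)]

lemma setOf_hits_eq_pi (S T : Finset (Fin n)) :
    {ω : Fin n → Z | hits B ω = S ∧ hits A ω = T} =
      Set.univ.pi fun i => {z | (z ∈ B ↔ i ∈ S) ∧ (z ∈ A ↔ i ∈ T)} := by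
  ext ω
  simp [hits, Finset.ext_iff, forall_and]

variable [MeasurableSpace Z] (P : Measure Z) [IsProbabilityMeasure P]

lemma measure_pi_hits_eq (hAB : A ⊆ B) {S T : Finset (Fin n)} (hTS : T ⊆ S) :
    Measure.pi (fun _ => P) {ω | hits B ω = S ∧ hits A ω = T} =
      P A ^ T.card * P (B \ A) ^ (S.card - T.card) * P Bᶜ ^ (n - S.card) := by
  have hT : ∀ i ∈ T, P {z | (z ∈ B ↔ i ∈ S) ∧ (z ∈ A ↔ i ∈ T)} = P A := fun i hi => by
    congr 1; ext z; simp only [Set.mem_ofPred_eq, hi, hTS hi, iff_true]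
    exact ⟨And.right, fun h => ⟨hAB h, h⟩⟩
  have hST : ∀ i ∈ S \ T, P {z | (z ∈ B ↔ i ∈ S) ∧ (z ∈ A ↔ i ∈ T)} = P (B \ A) :=
    fun i hi => by
      rw [Finset.mem_sdiff] at hi
      congr 1; ext z; simp [hi.1, hi.2]
  have hS : ∀ i ∈ Finset.univ \ S, P {z | (z ∈ B ↔ i ∈ S) ∧ (z ∈ A ↔ i ∈ T)} = P Bᶜ :=
    fun i hi => by
      have hiS : i ∉ S := (Finset.mem_sdiff.1 hi).2
      have hiT : i ∉ T := fun h => hiS (hTS h)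
      congr 1; ext z; simp only [Set.mem_ofPred_eq, hiS, hiT, iff_false, Set.mem_compl_iff]
      exact ⟨And.left, fun h => ⟨h, fun hA => h (hAB hA)⟩⟩
  rw [setOf_hits_eq_pi, Measure.pi_pi, ← Finset.prod_sdiff (Finset.subset_univ S),
    ← Finset.prod_sdiff hTS, Finset.prod_congr rfl hT, Finset.prod_congr rfl hST,
    Finset.prod_congr rfl hS]
  simp only [Finset.prod_const, Finset.card_sdiff_of_subset hTS,
    Finset.card_sdiff_of_subset (Finset.subset_univ S), Finset.card_univ, Fintype.card_fin]
  ring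

lemma sum_measure_pi_hits_eq (hA : MeasurableSet A) (hB : MeasurableSet B) (hAB : A ⊆ B)
    (F : ℕ → Prop) [DecidablePred F] (S : Finset (Fin n)) :
    ∑ T ∈ S.powerset.filter (fun T => F T.card),
        Measure.pi (fun _ => P) {ω | hits B ω = S ∧ hits A ω = T} =
      (∑ k ∈ (Finset.range (S.card + 1)).filter F,
          (S.card.choose k : ℝ≥0∞) * (P A / P B) ^ k * (1 - P A / P B) ^ (S.card - k)) *
        (P B ^ S.card * (1 - P B) ^ (n - S.card)) := by
  set q := P A / P B
  have hcyl : ∀ T ∈ S.powerset.filter (fun T => F T.card),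
      Measure.pi (fun _ => P) {ω | hits B ω = S ∧ hits A ω = T} =
        q ^ T.card * (1 - q) ^ (S.card - T.card) * (P B ^ S.card * (1 - P B) ^ (n - S.card)) := by
    intro T hT
    have hTS := Finset.mem_powerset.1 (Finset.mem_filter.1 hT).1
    rw [measure_pi_hits_eq P hAB hTS, measure_eq_div_mul_of_subset hAB,
      measure_diff_eq_one_sub_div_mul hA hAB, measure_compl hB (measure_ne_top P B), measure_univ,
      ← pow_sub_mul_pow (P B) (Finset.card_le_card hTS), mul_pow, mul_pow]
    ring
  set c := P B ^ S.card * (1 - P B) ^ (n - S.card)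
  rw [Finset.sum_congr rfl hcyl, Finset.sum_filter,
    Finset.sum_powerset_apply_card (fun k => if F k then q ^ k * (1 - q) ^ (S.card - k) * c else 0),
    Finset.sum_mul, Finset.sum_filter]
  refine Finset.sum_congr rfl fun k _ => ?_
  split_ifs <;> simp only [nsmul_eq_mul, smul_zero]
  ring

-- Given `#(hits B ω) = m`, the count `#(hits A ω)` is binomial with parameter `P A / P B`.
theorem measure_pi_card_hits_le (hA : MeasurableSet A) (hB : MeasurableSet B) (hAB : A ⊆ B)
    (F : ℕ → ℕ → Prop) [∀ m, DecidablePred (F m)] {ε : ℝ≥0∞} (hF₀ : ¬F 0 0)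
    (hF : 0 < P B → ∀ m, 0 < m → ∑ k ∈ (Finset.range (m + 1)).filter (F m),
      (m.choose k : ℝ≥0∞) * (P A / P B) ^ k * (1 - P A / P B) ^ (m - k) ≤ ε) :
    Measure.pi (fun _ : Fin n => P) {ω | F (hits B ω).card (hits A ω).card} ≤ ε := by
  set p := P B
  have hmass : ∀ m, (∑ k ∈ (Finset.range (m + 1)).filter (F m),
      (m.choose k : ℝ≥0∞) * (P A / p) ^ k * (1 - P A / p) ^ (m - k)) * p ^ m ≤ ε * p ^ m := by
    intro m
    rcases Nat.eq_zero_or_pos m with rfl | hm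
    · simp [Finset.filter_singleton, hF₀]
    rcases eq_or_ne p 0 with hp | hp
    · simp [hp, zero_pow hm.ne']
    exact mul_le_mul_left (hF (pos_iff_ne_zero.2 hp) m hm) _
  have hcover : {ω | F (hits B ω).card (hits A ω).card} ⊆
      ⋃ S ∈ Finset.univ.powerset, ⋃ T ∈ S.powerset.filter (fun T => F S.card T.card),
        {ω : Fin n → Z | hits B ω = S ∧ hits A ω = T} := by
    intro ω hω
    simp only [Set.mem_iUnion, Finset.mem_filter, Finset.mem_powerset]
    exact ⟨hits B ω, Finset.subset_univ _, hits A ω,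
      ⟨Finset.monotone_filter_right _ fun i _ => @hAB (ω i), hω⟩, rfl, rfl⟩
  calc Measure.pi (fun _ => P) {ω | F (hits B ω).card (hits A ω).card}
      ≤ ∑ S ∈ Finset.univ.powerset, ∑ T ∈ S.powerset.filter (fun T => F S.card T.card),
          Measure.pi (fun _ => P) {ω | hits B ω = S ∧ hits A ω = T} :=
        (measure_mono hcover).trans <| (measure_biUnion_finset_le _ _).trans <|
          Finset.sum_le_sum fun S _ => measure_biUnion_finset_le _ _
    _ ≤ ∑ S ∈ Finset.univ.powerset, ε * p ^ S.card * (1 - p) ^ (n - S.card) := by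
        refine Finset.sum_le_sum fun S _ => ?_
        rw [sum_measure_pi_hits_eq P hA hB hAB, ← mul_assoc]
        exact mul_le_mul_left (hmass _) _
    _ = ε * (p + (1 - p)) ^ n := by
        rw [Finset.sum_powerset_apply_card (fun m => ε * p ^ m * (1 - p) ^ (n - m)), add_pow,
          Finset.mul_sum, Finset.card_univ, Fintype.card_fin]
        refine Finset.sum_congr rfl fun m _ => ?_
        rw [nsmul_eq_mul]
        ring
    _ = ε := by rw [add_tsub_cancel_of_le prob_le_one, one_pow, mul_one]

theorem measure_pi_not_near_le (hA : MeasurableSet A) (hB : MeasurableSet B) (hAB : A ⊆ B)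
    (L : ℝ) {r : ℝ≥0∞} {ρ : ℕ → ℕ → ℝ≥0∞} {π : ℕ → ℝ≥0∞} (hr : 0 < P B → r = P A / P B)
    (hρ : ∀ m k, 0 < m → ρ m k = k / m)
    (hπ : ∀ m, 0 < m → π m = ENNReal.ofReal (Real.sqrt (L / (2 * m))))
    (h₀ : Near r (ρ 0 0) (π 0)) :
    Measure.pi (fun _ : Fin n => P)
        {ω | ¬Near r (ρ (hits B ω).card (hits A ω).card) (π (hits B ω).card)} ≤
      ENNReal.ofReal (2 * Real.exp (-L)) := by
  classical
  refine measure_pi_card_hits_le P hA hB hAB (fun m k => ¬Near r (ρ m k) (π m)) (not_not.2 h₀) ?_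
  intro hp m hm
  set q := (P A / P B).toReal
  have hq : P A / P B = ENNReal.ofReal q :=
    (ENNReal.ofReal_toReal (ENNReal.div_ne_top (measure_ne_top P A) hp.ne')).symm
  have hq0 : 0 ≤ q := ENNReal.toReal_nonneg
  have hq1 : q ≤ 1 := ENNReal.toReal_le_of_le_ofReal zero_le_one <| by
    rw [ENNReal.ofReal_one]
    exact ENNReal.div_le_of_le_mul (by rw [one_mul]; exact measure_mono hAB)
  set t := Real.sqrt (L / (2 * m))
  have hmR : (0 : ℝ) < m := Nat.cast_pos.2 hm
  have hfar : ∀ k, ¬Near r (ρ m k) (π m) → m * t ≤ |k - m * q| := by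
    intro k hk
    rw [hr hp, hq, hρ m k hm, hπ m hm, ← ENNReal.ofReal_natCast k, ← ENNReal.ofReal_natCast m,
      ← ENNReal.ofReal_div_of_pos hmR, near_ofReal_iff hq0 (by positivity) (Real.sqrt_nonneg _),
      not_le] at hk
    calc m * t ≤ m * |q - k / m| := by gcongr
      _ = |k - m * q| := by
        rw [abs_sub_comm, ← abs_of_pos hmR, ← abs_mul, abs_of_pos hmR]; congr 1; field_simp
  have hL : L ≤ 2 * m * t ^ 2 := by
    refine (div_le_iff₀' (by positivity)).1 ?_
    rcases le_total 0 (L / (2 * m)) with h | h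
    · exact (Real.sq_sqrt h).ge
    · exact h.trans (sq_nonneg t)
  rw [hq, ← Finset.sum_congr rfl fun k _ => ofReal_binomial_term hq0 hq1 m k,
    ← ENNReal.ofReal_sum_of_nonneg fun k _ => binomial_term_nonneg hq0 hq1 m k]
  refine ENNReal.ofReal_le_ofReal ?_
  calc _ ≤ ∑ k ∈ (Finset.range (m + 1)).filter (fun k : ℕ => m * t ≤ |k - m * q|),
          (m.choose k : ℝ) * q ^ k * (1 - q) ^ (m - k) :=
        Finset.sum_le_sum_of_subset_of_nonneg
          (Finset.monotone_filter_right _ fun k _ => hfar k)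
          fun k _ _ => binomial_term_nonneg hq0 hq1 m k
    _ ≤ 2 * Real.exp (-(2 * m * t ^ 2)) :=
        binomial_two_sided_tail_le hq0 hq1 (Real.sqrt_nonneg _) m
    _ ≤ 2 * Real.exp (-L) := by gcongr

end Hits

lemma ofReal_two_mul_exp_neg_eq {c δ : ℝ} (hδ : 0 < δ) :
    ENNReal.ofReal (2 * Real.exp (-(c * Real.log 2 + Real.log (2 / δ)))) =
      ENNReal.ofReal δ * 2 ^ (-c) := by
  have hexp : 2 * Real.exp (-(c * Real.log 2 + Real.log (2 / δ))) = δ * 2 ^ (-c) := by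
    rw [neg_add, Real.exp_add, Real.exp_neg (Real.log _), Real.exp_log (by positivity),
      Real.rpow_def_of_pos two_pos]
    field_simp
  rw [hexp, ENNReal.ofReal_mul hδ.le, ← ENNReal.ofReal_rpow_of_pos two_pos, ENNReal.ofReal_ofNat]

section Classifier

variable {𝓧 : Type*} [MeasurableSpace 𝓧] (P : Measure (𝓧 × Bool)) [IsProbabilityMeasure P]
  {h : 𝓧 → Bool} {n : ℕ}

theorem measure_pi_not_near_RD_le (hh : Measurable h) (c δ : ℝ) :
    Measure.pi (fun _ : Fin n => P)
        {ω | ¬Near (RD P h) (RhatD h ω) (pen c δ (nD h ω))} ≤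
      ENNReal.ofReal (2 * Real.exp (-(c * Real.log 2 + Real.log (2 / δ)))) :=
  measure_pi_not_near_le P (A := {z : 𝓧 × Bool | z.2 = false ∧ h z.1 = true})
    (B := {z : 𝓧 × Bool | h z.1 = true})
    ((measurable_snd (measurableSet_singleton false)).inter
      (hh.comp measurable_fst (measurableSet_singleton true)))
    (hh.comp measurable_fst (measurableSet_singleton true)) (fun _ hz => hz.2)
    (c * Real.log 2 + Real.log (2 / δ)) (ρ := fun m k => if 0 < m then k / m else ⊤)
    (fun hp => if_pos hp) (fun _ _ hm => if_pos hm) (fun _ hm => if_pos hm)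
    (by simp [Near, pen])

theorem measure_pi_not_near_RFN_le (hh : Measurable h) (c δ : ℝ) :
    Measure.pi (fun _ : Fin n => P)
        {ω | ¬Near (RFN P h) (RhatFN h ω) (penNP c δ (npos ω))} ≤
      ENNReal.ofReal (2 * Real.exp (-(c * Real.log 2 + Real.log (2 / δ)))) := by
  have hRFN : RFN P h = P {z | z.2 = true ∧ h z.1 = false} / P {z | z.2 = true} := by
    simp only [RFN, and_comm]
  refine measure_pi_not_near_le P (A := {z : 𝓧 × Bool | z.2 = true ∧ h z.1 = false})
    (B := {z : 𝓧 × Bool | z.2 = true})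
    ((measurable_snd (measurableSet_singleton true)).inter
      (hh.comp measurable_fst (measurableSet_singleton false)))
    (measurable_snd (measurableSet_singleton true)) (fun _ hz => hz.1)
    (c * Real.log 2 + Real.log (2 / δ)) (ρ := fun m k => if 0 < m then k / m else 0)
    (fun _ => hRFN) (fun _ _ hm => if_pos hm) (fun _ hm => if_pos hm) ⟨?_, by simp⟩
  show RFN P h ≤ 0 + 1
  rw [hRFN, zero_add]
  exact ENNReal.div_le_of_le_mul (by rw [one_mul]; exact measure_mono fun z hz => hz.1)

end Classifier

lemma tsub_tsub_le_tsub_of_le_add {α : Type*} [PartialOrder α] [AddCommSemigroup α] [Sub α]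
    [OrderedSub α] [AddLeftMono α] {a b c e : α} (h : b ≤ a + e) : c - a - e ≤ c - b := by
  rw [tsub_tsub]
  exact tsub_le_tsub_left h c

theorem measure_pi_forall_near_ge {𝓧 : Type*} [MeasurableSpace 𝓧] (P : Measure (𝓧 × Bool))
    [IsProbabilityMeasure P] {H : Set (𝓧 → Bool)} (hHcount : H.Countable)
    (hHmeas : ∀ h ∈ H, Measurable h) (cl : (𝓧 → Bool) → ℝ)
    (hKraft : ∑' h : H, (2 : ℝ≥0∞) ^ (-(cl h.1)) ≤ 1) {δ : ℝ} (hδ : 0 < δ) (n : ℕ) :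
    ENNReal.ofReal (1 - 2 * δ) ≤ Measure.pi (fun _ : Fin n => P)
      {ω | ∀ h ∈ H, Near (RD P h) (RhatD h ω) (pen (cl h) δ (nD h ω)) ∧
        Near (RFN P h) (RhatFN h ω) (penNP (cl h) δ (npos ω))} := by
  set μ := Measure.pi (fun _ : Fin n => P)
  set good := {ω | ∀ h ∈ H, Near (RD P h) (RhatD h ω) (pen (cl h) δ (nD h ω)) ∧
    Near (RFN P h) (RhatFN h ω) (penNP (cl h) δ (npos ω))}
  set bad : (𝓧 → Bool) → Set (Fin n → 𝓧 × Bool) := fun h =>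
    {ω | ¬Near (RD P h) (RhatD h ω) (pen (cl h) δ (nD h ω))} ∪
      {ω | ¬Near (RFN P h) (RhatFN h ω) (penNP (cl h) δ (npos ω))}
  have hcover : goodᶜ ⊆ ⋃ h ∈ H, bad h := by
    intro ω hω
    simp only [good, Set.mem_compl_iff, Set.mem_ofPred_eq, not_forall, not_and_or] at hω
    obtain ⟨h, hh, hfar⟩ := hω
    exact Set.mem_biUnion hh hfar
  have hbad : ∀ h ∈ H, μ (bad h) ≤ 2 * (ENNReal.ofReal δ * 2 ^ (-cl h)) := fun h hh => by
    rw [two_mul, ← ofReal_two_mul_exp_neg_eq hδ]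
    exact (measure_union_le _ _).trans <| add_le_add
      (measure_pi_not_near_RD_le P (hHmeas h hh) _ _)
      (measure_pi_not_near_RFN_le P (hHmeas h hh) _ _)
  have hgood_compl : μ goodᶜ ≤ ENNReal.ofReal (2 * δ) :=
    calc μ goodᶜ ≤ ∑' h : H, μ (bad h) :=
          (measure_mono hcover).trans (measure_biUnion_le μ hHcount _)
      _ ≤ ∑' h : H, 2 * (ENNReal.ofReal δ * 2 ^ (-cl h)) :=
        ENNReal.tsum_le_tsum fun h => hbad h h.2
      _ = ENNReal.ofReal (2 * δ) * ∑' h : H, (2 : ℝ≥0∞) ^ (-(cl h.1)) := by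
        rw [ENNReal.tsum_mul_left, ENNReal.tsum_mul_left, ← mul_assoc,
          ENNReal.ofReal_mul zero_le_two, ENNReal.ofReal_ofNat]
      _ ≤ ENNReal.ofReal (2 * δ) := mul_le_of_le_one_right' hKraft
  calc ENNReal.ofReal (1 - 2 * δ) = 1 - ENNReal.ofReal (2 * δ) := by
        rw [ENNReal.ofReal_sub 1 (by positivity), ENNReal.ofReal_one]
    _ ≤ 1 - μ goodᶜ := tsub_le_tsub_left hgood_compl 1
    _ ≤ μ good := tsub_le_iff_right.2 (measure_univ.symm.trans_le (measure_univ_le_add_compl good))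

theorem precision_recall_constrained_learning_general
    {𝓧 : Type*} [MeasurableSpace 𝓧] (P : Measure (𝓧 × Bool)) [IsProbabilityMeasure P]
    (H : Set (𝓧 → Bool)) (hHcount : H.Countable) (hHmeas : ∀ h ∈ H, Measurable h)
    (cl : (𝓧 → Bool) → ℝ)
    (hKraft : ∑' h : H, (2 : ℝ≥0∞) ^ (-(cl h.1)) ≤ 1)
    (n : ℕ)
    (β : ℝ)
    (δ : ℝ) (hδ : 0 < δ)
    (hstar : 𝓧 → Bool) (hstar_mem : hstar ∈ H)
    (hstar_feas : ENNReal.ofReal β ≤ QRE P hstar)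
    (hhat : (Fin n → 𝓧 × Bool) → (𝓧 → Bool))
    (hhat_mem : ∀ ω, hhat ω ∈ H)
    (hhat_feas : ∀ ω, ENNReal.ofReal β - penNP (cl (hhat ω)) δ (npos ω) ≤
      QhatRE (hhat ω) ω)
    (hhat_max : ∀ ω, ∀ h ∈ H, ENNReal.ofReal β - penNP (cl h) δ (npos ω) ≤ QhatRE h ω →
      QhatPR h ω - pen (cl h) δ (nD h ω) ≤
        QhatPR (hhat ω) ω - pen (cl (hhat ω)) δ (nD (hhat ω) ω)) :
    ENNReal.ofReal (1 - 2 * δ) ≤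
      (Measure.pi fun _ : Fin n => P)
        {ω | QPR P hstar - 2 * pen (cl hstar) δ (nD hstar ω) ≤ QPR P (hhat ω) ∧
          ENNReal.ofReal β - 2 * penNP (cl (hhat ω)) δ (npos ω) ≤ QRE P (hhat ω)} := by
  refine (measure_pi_forall_near_ge P hHcount hHmeas cl hKraft hδ n).trans (measure_mono ?_)
  intro ω hω
  obtain ⟨⟨-, hRD_star⟩, -, hRFN_star⟩ := hω hstar hstar_mem
  obtain ⟨⟨hRD_hat, -⟩, hRFN_hat, -⟩ := hω (hhat ω) (hhat_mem ω)
  have hstar_feas_emp : ENNReal.ofReal β - penNP (cl hstar) δ (npos ω) ≤ QhatRE hstar ω :=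
    (tsub_le_tsub_right hstar_feas _).trans (tsub_tsub_le_tsub_of_le_add hRFN_star)
  constructor
  · calc QPR P hstar - 2 * pen (cl hstar) δ (nD hstar ω)
        = QPR P hstar - pen (cl hstar) δ (nD hstar ω) - pen (cl hstar) δ (nD hstar ω) := by
          rw [two_mul, tsub_tsub]
      _ ≤ QhatPR hstar ω - pen (cl hstar) δ (nD hstar ω) :=
          tsub_le_tsub_right (tsub_tsub_le_tsub_of_le_add hRD_star) _
      _ ≤ QhatPR (hhat ω) ω - pen (cl (hhat ω)) δ (nD (hhat ω) ω) :=
          hhat_max ω hstar hstar_mem hstar_feas_emp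
      _ ≤ QPR P (hhat ω) := tsub_tsub_le_tsub_of_le_add hRD_hat
  · calc ENNReal.ofReal β - 2 * penNP (cl (hhat ω)) δ (npos ω)
        = ENNReal.ofReal β - penNP (cl (hhat ω)) δ (npos ω) - penNP (cl (hhat ω)) δ (npos ω) := by
          rw [two_mul, tsub_tsub]
      _ ≤ QhatRE (hhat ω) ω - penNP (cl (hhat ω)) δ (npos ω) :=
          tsub_le_tsub_right (hhat_feas ω) _
      _ ≤ QRE P (hhat ω) := tsub_tsub_le_tsub_of_le_add hRFN_hat

/-- **Corollary 4 (precision and recall).** Let `H` be countable with codelengths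
satisfying the Kraft inequality, let `h*` maximize the precision `Q_PR` over
`{h ∈ H : Q_RE(h) ≥ β}` and let `ĥ` maximize `Q̂_PR - φ_D` over
`{h ∈ H : Q̂_RE(h) ≥ β - φ_FN(h, δ)}`.  Then for any `δ > 0` and any `n ≥ 1`, with
probability at least `1 - 2δ` over the training sample, both
`Q_PR(ĥ) ≥ Q_PR(h*) - 2φ_D(h*, δ)` and `Q_RE(ĥ) ≥ β - 2φ_FN(ĥ, δ)`. -/
theorem precision_recall_constrained_learning
    {𝓧 : Type*} [MeasurableSpace 𝓧] (P : Measure (𝓧 × Bool)) [IsProbabilityMeasure P]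
    (hP1 : 0 < P {z : 𝓧 × Bool | z.2 = true})
    (H : Set (𝓧 → Bool)) (hHcount : H.Countable) (hHmeas : ∀ h ∈ H, Measurable h)
    (cl : (𝓧 → Bool) → ℝ)
    (hKraft : ∑' h : H, (2 : ℝ≥0∞) ^ (-(cl h.1)) ≤ 1)
    (n : ℕ) (hn : 1 ≤ n)
    (β : ℝ) (hβ0 : 0 < β) (hβ1 : β < 1)
    (δ : ℝ) (hδ : 0 < δ)
    (hstar : 𝓧 → Bool) (hstar_mem : hstar ∈ H)
    (hstar_feas : ENNReal.ofReal β ≤ QRE P hstar)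
    (hstar_max : ∀ h ∈ H, ENNReal.ofReal β ≤ QRE P h → QPR P h ≤ QPR P hstar)
    (hhat : (Fin n → 𝓧 × Bool) → (𝓧 → Bool))
    (hhat_mem : ∀ ω, hhat ω ∈ H)
    (hhat_feas : ∀ ω, ENNReal.ofReal β - penNP (cl (hhat ω)) δ (npos ω) ≤
      QhatRE (hhat ω) ω)
    (hhat_max : ∀ ω, ∀ h ∈ H, ENNReal.ofReal β - penNP (cl h) δ (npos ω) ≤ QhatRE h ω →
      QhatPR h ω - pen (cl h) δ (nD h ω) ≤
        QhatPR (hhat ω) ω - pen (cl (hhat ω)) δ (nD (hhat ω) ω)) :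
    ENNReal.ofReal (1 - 2 * δ) ≤
      (Measure.pi fun _ : Fin n => P)
        {ω | QPR P hstar - 2 * pen (cl hstar) δ (nD hstar ω) ≤ QPR P (hhat ω) ∧
          ENNReal.ofReal β - 2 * penNP (cl (hhat ω)) δ (npos ω) ≤ QRE P (hhat ω)} :=
  precision_recall_constrained_learning_general P H hHcount hHmeas cl hKraft n β δ hδ hstar
    hstar_mem hstar_feas hhat hhat_mem hhat_feas hhat_max
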